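/- In the augmented graph G' built from a strongly connected directed graph G with parameters ν, k, ε satisfying ν/ε + ν < m and (1+ε)(2ν/(εk) + k) < n and d_min^out ≥ k: if the minimum (s,t)-cut capacity is at most ν/ε + ν, then G has a separation triple (L,S,R) with x ∈ L, |S| ≤ (1+ε)k, and vol^out_G(L) ≤ ν/ε + ν + 1. -/

import Mathlib

open Finset ENNReal

inductive AugV (V : Type) where
  | s : AugV V
  | t : AugV V
  | inV : V → AugV V
  | outV : V → AugV V
deriving DecidableEq

variable {V : Type} [Fintype V] [DecidableEq V]

/-- The out-degree of `v` in the directed graph with edge set `E`. -/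
def outDeg (E : Finset (V × V)) (v : V) : ℕ :=
  (Finset.univ.filter fun w => (v, w) ∈ E).card

/-- The capacities of the augmented graph `G'` built from the directed graph
`G = (V,E)` with seed vertex `x` and parameters `ν, k, ε`:
edges `(v_in, v_out)` of capacity `ν/(εk)` for `v ≠ x`, edges `(v_out, w_in)`
of capacity `∞` for `(v,w) ∈ E` (there is no `x_in`), edges `(v_out, t)` of
capacity `deg^out(v)`, and the edge `(s, x_out)` of capacity `ν/ε + ν + 1`. -/
noncomputable def augCap (E : Finset (V × V)) (x : V) (ν k : ℕ) (ε : ℝ) :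
    AugV V → AugV V → ℝ≥0∞
  | AugV.inV v, AugV.outV w =>
      if v = w ∧ v ≠ x then ENNReal.ofReal ((ν : ℝ) / (ε * k)) else 0
  | AugV.outV v, AugV.inV w => if (v, w) ∈ E ∧ w ≠ x then ⊤ else 0
  | AugV.outV v, AugV.t => (outDeg E v : ℝ≥0∞)
  | AugV.s, AugV.outV v =>
      if v = x then ENNReal.ofReal ((ν : ℝ) / ε + (ν : ℝ) + 1) else 0
  | _, _ => 0

/-- The capacity of a set of edges `C` of the augmented graph. -/
noncomputable def cutCap (c : AugV V → AugV V → ℝ≥0∞)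
    (C : Finset (AugV V × AugV V)) : ℝ≥0∞ :=
  ∑ e ∈ C, c e.1 e.2

/-- `C` is an `(s,t)`-edge-cut: after removing the edges of `C`, there is no
path from `s` to `t` along edges of positive capacity. -/
def IsSTCut (c : AugV V → AugV V → ℝ≥0∞) (C : Finset (AugV V × AugV V)) : Prop :=
  ¬ Relation.ReflTransGen (fun a b => c a b ≠ 0 ∧ (a, b) ∉ C) AugV.s AugV.t

/-! Take a minimum cut `C` of `G'` and let `A` be the set of vertices reachable from `s` in
`G' - C`. Put `v` into `L` if `v_out ∈ A`, into `S` if only `v_in ∈ A`, and into `R` otherwise.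
As the cut is finite, no `∞`-edge `(v_out, w_in)` leaves `A`, so no edge of `G` goes from `L` to
`R`; as the cut is cheaper than the edge `(s, x_out)`, `x ∈ L`. Every `v ∈ S` contributes the edge
`(v_in, v_out)` and every `v ∈ L` the edge `(v_out, t)` to the cut, so
`|S| ν/(εk) + vol(L) ≤ ν/ε + ν`, which gives both bounds. Since `deg^out ≥ k` it also gives
`|L| ≤ (1+ε) ν/(εk)`, and the hypothesis on `n` then leaves `R` nonempty. -/

instance : Fintype (AugV V) :=
  Fintype.ofSurjective (fun a : (Unit ⊕ Unit) ⊕ (V ⊕ V) =>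
    match a with
    | .inl (.inl _) => AugV.s
    | .inl (.inr _) => AugV.t
    | .inr (.inl v) => AugV.inV v
    | .inr (.inr v) => AugV.outV v)
    (by
      rintro (_ | _ | v | v)
      exacts [⟨.inl (.inl ()), rfl⟩, ⟨.inl (.inr ()), rfl⟩, ⟨.inr (.inl v), rfl⟩,
        ⟨.inr (.inr v), rfl⟩])

section Cut

variable {α : Type} (c : AugV α → AugV α → ℝ≥0∞) (C : Finset (AugV α × AugV α))

theorem exists_isSTCut_cutCap_eq_sInf [Fintype α] [DecidableEq α] :
    ∃ C, IsSTCut c C ∧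
      cutCap c C = sInf {r | ∃ C : Finset (AugV α × AugV α), IsSTCut c C ∧ cutCap c C = r} := by
  have hne : {r | ∃ C : Finset (AugV α × AugV α), IsSTCut c C ∧ cutCap c C = r}.Nonempty := by
    refine ⟨_, univ, fun h => ?_, rfl⟩
    obtain h | ⟨b, hb, -⟩ := Relation.ReflTransGen.cases_head h
    · cases h
    · exact hb.2 (mem_univ _)
  have hfin : {r | ∃ C : Finset (AugV α × AugV α), IsSTCut c C ∧ cutCap c C = r}.Finite :=
    (Set.finite_range (cutCap c)).subset fun _ ⟨C, _, hC⟩ => ⟨C, hC⟩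
  exact hne.csInf_mem hfin

def sourceSide (a : AugV α) : Prop :=
  Relation.ReflTransGen (fun a b => c a b ≠ 0 ∧ (a, b) ∉ C) AugV.s a

variable {c C}

theorem sourceSide_s : sourceSide c C AugV.s := Relation.ReflTransGen.refl

theorem sum_le_cutCap_of_crossing (D : Finset (AugV α × AugV α))
    (hD : ∀ e ∈ D, sourceSide c C e.1 ∧ ¬ sourceSide c C e.2) :
    ∑ e ∈ D, c e.1 e.2 ≤ cutCap c C := by
  rw [← sum_filter_ne_zero]
  refine sum_le_sum_of_subset fun e he => ?_
  obtain ⟨heD, hce⟩ := mem_filter.1 he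
  by_contra heC
  exact (hD e heD).2 ((hD e heD).1.tail ⟨hce, heC⟩)

theorem le_cutCap_of_crossing {a b : AugV α} (ha : sourceSide c C a) (hb : ¬ sourceSide c C b) :
    c a b ≤ cutCap c C := by
  simpa using sum_le_cutCap_of_crossing {(a, b)} (by simp [ha, hb])

variable [Fintype α] (c C)

open scoped Classical in
noncomputable def cutLeft : Finset α :=
  univ.filter fun v => sourceSide c C (AugV.outV v)

open scoped Classical in
noncomputable def cutSeparator : Finset α :=
  univ.filter fun v => sourceSide c C (AugV.inV v) ∧ ¬ sourceSide c C (AugV.outV v)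

open scoped Classical in
noncomputable def cutRight : Finset α :=
  univ.filter fun v => ¬ sourceSide c C (AugV.inV v) ∧ ¬ sourceSide c C (AugV.outV v)

variable {c C} {v : α}

@[simp] theorem mem_cutLeft : v ∈ cutLeft c C ↔ sourceSide c C (AugV.outV v) := by
  simp [cutLeft]

@[simp] theorem mem_cutSeparator :
    v ∈ cutSeparator c C ↔ sourceSide c C (AugV.inV v) ∧ ¬ sourceSide c C (AugV.outV v) := by
  simp [cutSeparator]

@[simp] theorem mem_cutRight :
    v ∈ cutRight c C ↔ ¬ sourceSide c C (AugV.inV v) ∧ ¬ sourceSide c C (AugV.outV v) := by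
  simp [cutRight]

theorem mem_cutLeft_or_mem_cutSeparator_or_mem_cutRight (v : α) :
    v ∈ cutLeft c C ∨ v ∈ cutSeparator c C ∨ v ∈ cutRight c C := by
  simp only [mem_cutLeft, mem_cutSeparator, mem_cutRight]
  tauto

theorem disjoint_cutLeft_cutSeparator : Disjoint (cutLeft c C) (cutSeparator c C) :=
  disjoint_left.2 fun _ hL hS => (mem_cutSeparator.1 hS).2 (mem_cutLeft.1 hL)

theorem disjoint_cutLeft_cutRight : Disjoint (cutLeft c C) (cutRight c C) :=
  disjoint_left.2 fun _ hL hR => (mem_cutRight.1 hR).2 (mem_cutLeft.1 hL)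

theorem disjoint_cutSeparator_cutRight : Disjoint (cutSeparator c C) (cutRight c C) :=
  disjoint_left.2 fun _ hS hR => (mem_cutRight.1 hR).1 (mem_cutSeparator.1 hS).1

end Cut

theorem Finset.nonempty_of_card_add_card_lt {L S R : Finset V}
    (hcover : ∀ v : V, v ∈ L ∨ v ∈ S ∨ v ∈ R) (hcard : #L + #S < Fintype.card V) :
    R.Nonempty := by
  rw [nonempty_iff_ne_empty]
  rintro rfl
  have huniv : (univ : Finset V) ⊆ L ∪ S := fun v _ => by simpa using hcover v
  have := (card_le_card huniv).trans (card_union_le L S)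
  rw [card_univ] at this
  omega

section Augmented

variable {E : Finset (V × V)} {x : V} {ν k : ℕ} {ε : ℝ} {C : Finset (AugV V × AugV V)}

theorem not_sourceSide_inV_self : ¬ sourceSide (augCap E x ν k ε) C (AugV.inV x) := by
  intro h
  obtain h | ⟨b, -, hb, -⟩ := Relation.ReflTransGen.cases_tail h
  · cases h
  · cases b <;> simp [augCap] at hb

theorem sourceSide_outV_self (hC : cutCap (augCap E x ν k ε) C < ENNReal.ofReal (ν / ε + ν + 1)) :
    sourceSide (augCap E x ν k ε) C (AugV.outV x) := by
  by_contra h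
  have := le_cutCap_of_crossing sourceSide_s h
  simp only [augCap, if_true] at this
  exact (hC.trans_le this).false

theorem sourceSide_inV_of_mem (hC : cutCap (augCap E x ν k ε) C ≠ ⊤) {v w : V} (hvw : (v, w) ∈ E)
    (hw : w ≠ x) (hv : sourceSide (augCap E x ν k ε) C (AugV.outV v)) :
    sourceSide (augCap E x ν k ε) C (AugV.inV w) := by
  by_contra h
  have := le_cutCap_of_crossing hv h
  simp only [augCap, hvw, hw, ne_eq, not_false_eq_true, and_self, if_true, top_le_iff] at this
  exact hC this

theorem not_mem_cutLeft_and_mem_cutRight (hC : cutCap (augCap E x ν k ε) C ≠ ⊤)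
    (hx : sourceSide (augCap E x ν k ε) C (AugV.outV x)) :
    ∀ e ∈ E, ¬(e.1 ∈ cutLeft (augCap E x ν k ε) C ∧ e.2 ∈ cutRight (augCap E x ν k ε) C) := by
  rintro ⟨v, w⟩ hvw ⟨hv, hw⟩
  rw [mem_cutLeft] at hv
  rw [mem_cutRight] at hw
  by_cases hwx : w = x
  · exact hw.2 (hwx ▸ hx)
  · exact hw.1 (sourceSide_inV_of_mem hC hvw hwx hv)

theorem ofReal_card_mul_add_vol_le_cutCap (hC : IsSTCut (augCap E x ν k ε) C) :
    ENNReal.ofReal (#(cutSeparator (augCap E x ν k ε) C) * (ν / (ε * k)) +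
      ((∑ v ∈ cutLeft (augCap E x ν k ε) C, outDeg E v : ℕ) : ℝ)) ≤
      cutCap (augCap E x ν k ε) C := by
  set c := augCap E x ν k ε
  set S := cutSeparator c C
  set L := cutLeft c C
  have hSx : ∀ v ∈ S, v ≠ x := fun v hv hvx =>
    not_sourceSide_inV_self (hvx ▸ (mem_cutSeparator.1 hv).1)
  have hcross := sum_le_cutCap_of_crossing (c := c) (C := C)
    ((S.image fun v => (AugV.inV v, AugV.outV v)) ∪ L.image fun v => (AugV.outV v, AugV.t)) ?_
  · rw [sum_union, sum_image, sum_image] at hcross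
    · refine (ofReal_add_le.trans (le_of_eq ?_)).trans hcross
      rw [ofReal_mul (Nat.cast_nonneg _), ofReal_natCast, ofReal_natCast, Nat.cast_sum,
        sum_congr rfl fun v hv => (show c (AugV.inV v) (AugV.outV v) = ENNReal.ofReal (ν / (ε * k)) by
          simp [c, augCap, hSx v hv]), sum_const, nsmul_eq_mul]
      rfl
    · simp
    · simp
    · simp [disjoint_left]
  · simp only [mem_union, mem_image]
    rintro _ (⟨v, hv, rfl⟩ | ⟨v, hv, rfl⟩)
    · exact mem_cutSeparator.1 hv
    · exact ⟨mem_cutLeft.1 hv, hC⟩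

theorem card_mul_add_vol_le (hε : 0 ≤ ε) (hC : IsSTCut (augCap E x ν k ε) C)
    (hcut : cutCap (augCap E x ν k ε) C ≤ ENNReal.ofReal (ν / ε + ν)) :
    #(cutSeparator (augCap E x ν k ε) C) * (ν / (ε * k)) +
      ((∑ v ∈ cutLeft (augCap E x ν k ε) C, outDeg E v : ℕ) : ℝ) ≤ ν / ε + ν :=
  (ofReal_le_ofReal_iff (by positivity)).1 ((ofReal_card_mul_add_vol_le_cutCap hC).trans hcut)

theorem vol_cutLeft_le (hε : 0 ≤ ε) (hC : IsSTCut (augCap E x ν k ε) C)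
    (hcut : cutCap (augCap E x ν k ε) C ≤ ENNReal.ofReal (ν / ε + ν)) :
    ((∑ v ∈ cutLeft (augCap E x ν k ε) C, outDeg E v : ℕ) : ℝ) ≤ ν / ε + ν := by
  have := card_mul_add_vol_le hε hC hcut
  have : 0 ≤ (#(cutSeparator (augCap E x ν k ε) C) : ℝ) * (ν / (ε * k)) := by positivity
  linarith

theorem one_add_mul_mul_div_eq (hk : 0 < k) (hε : 0 < ε) :
    (1 + ε) * k * (ν / (ε * k)) = ν / ε + ν := by
  field_simp

theorem card_cutSeparator_le (hν : 0 < ν) (hk : 0 < k) (hε : 0 < ε)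
    (hC : IsSTCut (augCap E x ν k ε) C)
    (hcut : cutCap (augCap E x ν k ε) C ≤ ENNReal.ofReal (ν / ε + ν)) :
    (#(cutSeparator (augCap E x ν k ε) C) : ℝ) ≤ (1 + ε) * k := by
  have := card_mul_add_vol_le hε.le hC hcut
  have : (0 : ℝ) ≤ ((∑ v ∈ cutLeft (augCap E x ν k ε) C, outDeg E v : ℕ) : ℝ) := Nat.cast_nonneg _
  refine le_of_mul_le_mul_right ?_ (by positivity : 0 < (ν : ℝ) / (ε * k))
  rw [one_add_mul_mul_div_eq hk hε]
  linarith

theorem card_cutLeft_le (hk : 0 < k) (hε : 0 < ε) (hdmin : ∀ v : V, k ≤ outDeg E v)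
    (hC : IsSTCut (augCap E x ν k ε) C)
    (hcut : cutCap (augCap E x ν k ε) C ≤ ENNReal.ofReal (ν / ε + ν)) :
    (#(cutLeft (augCap E x ν k ε) C) : ℝ) ≤ (1 + ε) * (ν / (ε * k)) := by
  have hdeg := card_nsmul_le_sum (cutLeft (augCap E x ν k ε) C) (outDeg E) k fun v _ => hdmin v
  rw [smul_eq_mul] at hdeg
  have hvol := vol_cutLeft_le hε.le hC hcut
  refine le_of_mul_le_mul_right ?_ (by positivity : (0 : ℝ) < k)
  rw [mul_right_comm, one_add_mul_mul_div_eq hk hε]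
  exact le_trans (by exact_mod_cast hdeg) hvol

end Augmented

theorem stmt15_general (E : Finset (V × V)) (x : V) (ν k : ℕ) (ε : ℝ)
    (hν : 0 < ν) (hk : 0 < k) (hε : 0 < ε)
    (hn : (1 + ε) * (2 * (ν : ℝ) / (ε * k) + (k : ℝ)) < (Fintype.card V : ℝ))
    (hdmin : ∀ v : V, k ≤ outDeg E v)
    (hcut : sInf {r : ℝ≥0∞ | ∃ C : Finset (AugV V × AugV V),
        IsSTCut (augCap E x ν k ε) C ∧ cutCap (augCap E x ν k ε) C = r} ≤
      ENNReal.ofReal ((ν : ℝ) / ε + (ν : ℝ))) :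
    ∃ L S R : Finset V,
      (∀ v : V, v ∈ L ∨ v ∈ S ∨ v ∈ R) ∧
      Disjoint L S ∧ Disjoint L R ∧ Disjoint S R ∧
      L.Nonempty ∧ R.Nonempty ∧
      (∀ e ∈ E, ¬(e.1 ∈ L ∧ e.2 ∈ R)) ∧
      x ∈ L ∧
      (S.card : ℝ) ≤ (1 + ε) * (k : ℝ) ∧
      ((∑ v ∈ L, outDeg E v : ℕ) : ℝ) ≤ (ν : ℝ) / ε + (ν : ℝ) + 1 := by
  obtain ⟨C, hC, hCmin⟩ := exists_isSTCut_cutCap_eq_sInf (augCap E x ν k ε)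
  rw [← hCmin] at hcut
  have hx : x ∈ cutLeft (augCap E x ν k ε) C := mem_cutLeft.2 <| sourceSide_outV_self <|
    hcut.trans_lt ((ofReal_lt_ofReal_iff (by positivity)).2 (lt_add_one _))
  have hS := card_cutSeparator_le hν hk hε hC hcut
  have hL := card_cutLeft_le hk hε hdmin hC hcut
  have hR : (cutRight (augCap E x ν k ε) C).Nonempty := by
    refine nonempty_of_card_add_card_lt mem_cutLeft_or_mem_cutSeparator_or_mem_cutRight ?_
    have : 0 < (ν : ℝ) / (ε * k) := by positivity
    rw [mul_div_assoc] at hn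
    have : (#(cutLeft (augCap E x ν k ε) C) + #(cutSeparator (augCap E x ν k ε) C) : ℝ) <
        Fintype.card V := by nlinarith
    exact_mod_cast this
  exact ⟨_, _, _, mem_cutLeft_or_mem_cutSeparator_or_mem_cutRight, disjoint_cutLeft_cutSeparator,
    disjoint_cutLeft_cutRight, disjoint_cutSeparator_cutRight, ⟨x, hx⟩, hR,
    not_mem_cutLeft_and_mem_cutRight (ne_top_of_le_ne_top ofReal_ne_top hcut) (mem_cutLeft.1 hx),
    hx, hS, (vol_cutLeft_le hε.le hC hcut).trans (le_add_of_nonneg_right zero_le_one)⟩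

/-- Suppose the parameters satisfy `ν/ε + ν < m`, `(1+ε)(2ν/(εk) + k) < n`
and `d_min^out ≥ k`. If the minimum `(s,t)`-cut capacity of the augmented
graph `G'` is at most `ν/ε + ν`, then `G` has a separation triple `(L,S,R)`
with `x ∈ L`, `|S| ≤ (1+ε)k` and `vol^out(L) ≤ ν/ε + ν + 1`. -/
theorem stmt15 (E : Finset (V × V)) (x : V) (ν k : ℕ) (ε : ℝ)
    (hν : 0 < ν) (hk : 0 < k) (hε : 0 < ε)
    (hstrong : ∀ u v : V, Relation.ReflTransGen (fun a b => (a, b) ∈ E) u v)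
    (hm : (ν : ℝ) / ε + (ν : ℝ) < (E.card : ℝ))
    (hn : (1 + ε) * (2 * (ν : ℝ) / (ε * k) + (k : ℝ)) < (Fintype.card V : ℝ))
    (hdmin : ∀ v : V, k ≤ outDeg E v)
    (hcut : sInf {r : ℝ≥0∞ | ∃ C : Finset (AugV V × AugV V),
        IsSTCut (augCap E x ν k ε) C ∧ cutCap (augCap E x ν k ε) C = r} ≤
      ENNReal.ofReal ((ν : ℝ) / ε + (ν : ℝ))) :
    ∃ L S R : Finset V,
      (∀ v : V, v ∈ L ∨ v ∈ S ∨ v ∈ R) ∧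
      Disjoint L S ∧ Disjoint L R ∧ Disjoint S R ∧
      L.Nonempty ∧ R.Nonempty ∧
      (∀ e ∈ E, ¬(e.1 ∈ L ∧ e.2 ∈ R)) ∧
      x ∈ L ∧
      (S.card : ℝ) ≤ (1 + ε) * (k : ℝ) ∧
      ((∑ v ∈ L, outDeg E v : ℕ) : ℝ) ≤ (ν : ℝ) / ε + (ν : ℝ) + 1 :=
  stmt15_general E x ν k ε hν hk hε hn hdmin hcut
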